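/- For a g-group decodable STBC with ordered partition Γ_1,...,Γ_g (i.e., A_l A_m^H + A_m A_l^H = 0 whenever l, m lie in different groups), the R matrix arising from QR decomposition of H_eq (assuming H_eq has full column rank) is block-diagonal upper-triangular: r_{ij} = 0 whenever i ∈ Γ_p, j ∈ Γ_q with p ≠ q. -/

import Mathlib

/-!
The columns `h_k` of `H_eq` realify the complex matrices `H A_k`, so
`⟪h_l, h_m⟫ = Re tr ((H A_l)(H A_m)ᴴ)`. When `l` and `m` lie in different groups the matrix
`(H A_l)(H A_m)ᴴ` is skew-Hermitian, since adding its conjugate transpose gives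
`H (A_l A_mᴴ + A_m A_lᴴ) Hᴴ = 0`; hence the two columns are orthogonal. Gram–Schmidt keeps `q_i`
in the span of `h_1, …, h_i`, and because the groups are consecutive, every `h_l` with `l ≤ i`
lies in a group different from that of `j > i`, so `q_i ⊥ h_j`.
-/

open Matrix Finset Kronecker
open scoped RealInnerProductSpace

/-- The realification `Ȟ` of a complex channel matrix `H`. -/
def checkMat {nr n : ℕ} (H : Matrix (Fin nr) (Fin n) ℂ) :
    Matrix (Fin nr × Fin 2) (Fin n × Fin 2) ℝ := fun p q =>
  if p.2 = 0 then (if q.2 = 0 then (H p.1 q.1).re else -(H p.1 q.1).im)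
  else (if q.2 = 0 then (H p.1 q.1).im else (H p.1 q.1).re)

/-- The generator matrix `G`: its `k`-th column is the realified vectorization of `A_k`. -/
def genMat {n K : ℕ} (A : Fin K → Matrix (Fin n) (Fin n) ℂ) :
    Matrix (Fin n × Fin n × Fin 2) (Fin K) ℝ := fun idx k =>
  if idx.2.2 = 0 then (A k idx.2.1 idx.1).re else (A k idx.2.1 idx.1).im

/-- The equivalent real channel matrix `H_eq = (I_n ⊗ Ȟ)·G`. -/
def heqMat {nr n K : ℕ} (H : Matrix (Fin nr) (Fin n) ℂ)
    (A : Fin K → Matrix (Fin n) (Fin n) ℂ) :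
    Matrix (Fin n × (Fin nr × Fin 2)) (Fin K) ℝ :=
  ((1 : Matrix (Fin n) (Fin n) ℝ) ⊗ₖ checkMat H) * genMat A

section TriangularSpan

variable {R M ι : Type*} [Semiring R] [AddCommMonoid M] [Module R M] [Preorder ι]
  [WellFoundedLT ι]

theorem mem_span_image_Iic_of_mem_span_insert {h q : ι → M}
    (hq : ∀ i, q i ∈ Submodule.span R (insert (h i) (q '' Set.Iio i))) (i : ι) :
    q i ∈ Submodule.span R (h '' Set.Iic i) := by
  induction i using WellFoundedLT.induction with
  | _ i ih =>
    refine Submodule.span_le.2 (Set.insert_subset_iff.2 ⟨?_, ?_⟩) (hq i)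
    · exact Submodule.subset_span ⟨i, le_rfl, rfl⟩
    · rintro _ ⟨l, hl, rfl⟩
      exact Submodule.span_mono (Set.image_mono (Set.Iic_subset_Iic.2 hl.le)) (ih l hl)

end TriangularSpan

section GramSchmidt

variable {ι E : Type*} [LinearOrder ι] [LocallyFiniteOrderBot ι] [WellFoundedLT ι]
  [NormedAddCommGroup E] [InnerProductSpace ℝ E]

theorem inner_eq_zero_of_gramSchmidt {h q : ι → E} (c : ι → ℝ)
    (hq : ∀ i, q i = c i • (h i - ∑ l ∈ Finset.Iio i, ⟪q l, h i⟫ • q l))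
    {i : ι} {v : E} (hv : ∀ l ≤ i, ⟪h l, v⟫ = 0) : ⟪q i, v⟫ = 0 := by
  have hspan : ∀ i, q i ∈ Submodule.span ℝ (insert (h i) (q '' Set.Iio i)) := fun i => by
    rw [hq i]
    refine Submodule.smul_mem _ _ (Submodule.sub_mem _ (Submodule.subset_span (Set.mem_insert _ _))
      (Submodule.sum_mem _ fun l hl => Submodule.smul_mem _ _ (Submodule.subset_span ?_)))
    exact Set.mem_insert_of_mem _ (Set.mem_image_of_mem q (Finset.mem_Iio.1 hl))
  have hperp : Submodule.span ℝ (h '' Set.Iic i) ≤ (ℝ ∙ v)ᗮ :=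
    Submodule.span_le.2 fun _ ⟨l, hl, hlv⟩ =>
      hlv ▸ Submodule.mem_orthogonal_singleton_iff_inner_left.2 (hv l hl)
  exact Submodule.mem_orthogonal_singleton_iff_inner_left.1
    (hperp (mem_span_image_Iic_of_mem_span_insert hspan i))

end GramSchmidt

theorem Matrix.re_trace_eq_zero_of_add_conjTranspose_eq_zero {m : Type*} [Fintype m]
    {M : Matrix m m ℂ} (hM : M + Mᴴ = 0) : M.trace.re = 0 := by
  have := congrArg (fun N => N.trace.re) hM
  simp only [trace_add, trace_conjTranspose, Complex.add_re, Complex.star_def,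
    Complex.conj_re, trace_zero, Complex.zero_re] at this
  linarith

section EquivalentChannel

variable {nr n K : ℕ} (H : Matrix (Fin nr) (Fin n) ℂ) (A : Fin K → Matrix (Fin n) (Fin n) ℂ)

theorem heqMat_apply (a : Fin n) (p : Fin nr) (s : Fin 2) (k : Fin K) :
    heqMat H A (a, (p, s)) k = if s = 0 then ((H * A k) p a).re else ((H * A k) p a).im := by
  fin_cases s <;>
  · simp only [heqMat, Matrix.mul_apply, kroneckerMap_apply, genMat, checkMat,
      Fintype.sum_prod_type, Fin.sum_univ_two, Matrix.one_apply, Complex.mul_re, Complex.mul_im,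
      ite_mul, one_mul, zero_mul, mul_ite, Complex.re_sum, Complex.im_sum]
    rw [Finset.sum_comm]
    simp only [↓reduceIte, Fin.zero_eta, Fin.mk_one, Fin.isValue, one_ne_zero, neg_mul,
      sum_add_distrib, sum_sub_distrib, sum_neg_distrib, sum_ite_eq, mem_univ]
    ring

theorem sum_heqMat_mul_heqMat (l m : Fin K) :
    ∑ idx, heqMat H A idx l * heqMat H A idx m = ((H * A l) * (H * A m)ᴴ).trace.re := by
  simp only [Fintype.sum_prod_type, Fin.sum_univ_two, heqMat_apply, Matrix.trace, Matrix.diag,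
    mul_apply, conjTranspose_apply, Complex.re_sum, Complex.mul_re, Complex.star_def,
    Complex.conj_re, Complex.conj_im]
  generalize H * A l = X, H * A m = Y
  rw [Finset.sum_comm]
  simp only [Fin.isValue, ↓reduceIte, one_ne_zero]
  refine Finset.sum_congr rfl fun _ _ => Finset.sum_congr rfl fun _ _ => by ring

theorem sum_heqMat_mul_heqMat_eq_zero {l m : Fin K} (hA : A l * (A m)ᴴ + A m * (A l)ᴴ = 0) :
    ∑ idx, heqMat H A idx l * heqMat H A idx m = 0 := by
  rw [sum_heqMat_mul_heqMat]
  refine re_trace_eq_zero_of_add_conjTranspose_eq_zero ?_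
  simp only [conjTranspose_mul, conjTranspose_conjTranspose, Matrix.mul_assoc]
  rw [← Matrix.mul_add, ← Matrix.mul_assoc (A l), ← Matrix.mul_assoc (A m), ← Matrix.add_mul, hA,
    Matrix.zero_mul, Matrix.mul_zero]

end EquivalentChannel

theorem multigroup_R_block_diagonal_general {nr n K g : ℕ}
    (A : Fin K → Matrix (Fin n) (Fin n) ℂ)
    (grp : Fin K → Fin g) (hmono : Monotone grp)
    (hA : ∀ l m : Fin K, grp l ≠ grp m → A l * (A m)ᴴ + A m * (A l)ᴴ = 0)
    (H : Matrix (Fin nr) (Fin n) ℂ)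
    (h q r : Fin K → EuclideanSpace ℝ (Fin n × (Fin nr × Fin 2)))
    (hh : ∀ k idx, h k idx = heqMat H A idx k)
    (hr : ∀ i, r i = h i - ∑ l ∈ Finset.Iio i, ⟪q l, h i⟫ • q l)
    (hq : ∀ i, q i = (‖r i‖)⁻¹ • r i) :
    ∀ i j : Fin K, i < j → grp i ≠ grp j → ⟪q i, h j⟫ = 0 := by
  intro i j hij hg
  refine inner_eq_zero_of_gramSchmidt (fun i => ‖r i‖⁻¹) (fun i => (hq i).trans (by rw [hr i]))
    fun l hl => ?_
  have hlj : grp l ≠ grp j := ((hmono hl).trans_lt ((hmono hij.le).lt_of_ne hg)).ne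
  have hinner : ⟪h l, h j⟫ = ∑ idx, heqMat H A idx l * heqMat H A idx j := by
    simp [PiLp.inner_apply, hh, mul_comm]
  rw [hinner, sum_heqMat_mul_heqMat_eq_zero H A (hA l j hlj)]

/-- For a `g`-group decodable STBC (cross-group weight matrices are Hurwitz–Radon
orthogonal, groups occupying consecutive index ranges), the R-factor of the QR
(Gram–Schmidt) decomposition of `H_eq` is block-diagonal upper-triangular:
`r_{ij} = ⟨q_i, h_j⟩ = 0` for `i < j` in different groups. -/
theorem multigroup_R_block_diagonal {nr n K g : ℕ}
    (A : Fin K → Matrix (Fin n) (Fin n) ℂ)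
    (grp : Fin K → Fin g) (hmono : Monotone grp)
    (hA : ∀ l m : Fin K, grp l ≠ grp m → A l * (A m)ᴴ + A m * (A l)ᴴ = 0)
    (H : Matrix (Fin nr) (Fin n) ℂ)
    (h q r : Fin K → EuclideanSpace ℝ (Fin n × (Fin nr × Fin 2)))
    (hh : ∀ k idx, h k idx = heqMat H A idx k)
    (hr : ∀ i, r i = h i - ∑ l ∈ Finset.Iio i, ⟪q l, h i⟫ • q l)
    (hrne : ∀ i, r i ≠ 0)
    (hq : ∀ i, q i = (‖r i‖)⁻¹ • r i) :
    ∀ i j : Fin K, i < j → grp i ≠ grp j → ⟪q i, h j⟫ = 0 :=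
  multigroup_R_block_diagonal_general A grp hmono hA H h q r hh hr hq
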